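/- Error estimate for the dual control reconstruction (Theorem 2.1): let {φ_k}_{k=0}^m be an orthonormal family in X, let controls u_k ∈ L²(0, t_f; Y) satisfy ‖𝓛u_k − φ_k‖_X ≤ ε_k for each 0 ≤ k ≤ m, and let y^δ be noisy data with ‖y^δ(t) − y(t)‖_Y ≤ δ for a.e. t ∈ [0,t_f], where y(t) = C x(t), x(t) = S_t x₀ + ∫₀^t S_{t−s} f(s) ds. Define x^m := Σ_{k=0}^m ⟨x₀, φ_k⟩ φ_k and x_δ^m := Σ_{k=0}^m α_k^δ φ_k with α_k^δ := ∫₀^{t_f} ⟨u_k(t), y^δ(t) − ξ(t)⟩_Y dt and ξ(t) = ∫₀^t C S_{t−s} f(s) ds. Then ‖x₀ − x_δ^m‖_X ≤ ‖x₀ − x^m‖_X + Σ_{k=0}^m ( ε_k ‖x₀‖_X + δ √(t_f) ‖u_k‖_{L²(0,t_f;Y)} ). -/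

import Mathlib

/-!
The reconstruction error is the truncation error `x₀ - x^m` plus `∑ (⟨x₀, φ_k⟩ - α_k^δ) φ_k`.
The Duhamel part of `y` is exactly `ξ`, so `y - ξ = C S_t x₀`, and duality turns
`∫ ⟨u_k, y - ξ⟩` into `⟨x₀, 𝓛u_k⟩`, which lies within `ε_k ‖x₀‖` of `⟨x₀, φ_k⟩`; the rest,
`∫ ⟨u_k, y^δ - y⟩`, is at most `δ ‖u_k‖_{L¹} ≤ δ √t_f ‖u_k‖_{L²}`.

For `𝓛u_k` to be a genuine Bochner integral one needs strong measurability of `t ↦ S_t^* v`,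
which is only weakly continuous. This is a Pettis-type argument: a weakly continuous image of a
separable set is separable, and on a separable range the projections onto an increasing chain of
finite-dimensional subspaces are measurable and converge pointwise.
-/

open MeasureTheory Set Filter Topology TopologicalSpace
open scoped RealInnerProductSpace

section

variable {α E F : Type*} [TopologicalSpace α] [NormedAddCommGroup E] [NormedSpace ℝ E]
  [NormedAddCommGroup F] [NormedSpace ℝ F]

theorem continuous_uncurry_clm_of_norm_le {T : α → E →L[ℝ] F} {M : ℝ}
    (hT : ∀ v, Continuous fun a => T a v) (hM : ∀ a, ‖T a‖ ≤ M) :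
    Continuous fun p : α × E => T p.1 p.2 := by
  refine continuous_iff_continuousAt.2 fun ⟨a₀, v₀⟩ => ?_
  rw [ContinuousAt, tendsto_iff_norm_sub_tendsto_zero]
  have hmajorant : Tendsto (fun p : α × E => M * ‖p.2 - v₀‖ + ‖T p.1 v₀ - T a₀ v₀‖)
      (𝓝 (a₀, v₀)) (𝓝 0) := by
    have : Continuous fun p : α × E => M * ‖p.2 - v₀‖ + ‖T p.1 v₀ - T a₀ v₀‖ := by fun_prop
    simpa using this.tendsto (a₀, v₀)
  refine squeeze_zero (fun _ => norm_nonneg _) (fun ⟨a, v⟩ => ?_) hmajorant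
  calc ‖T a v - T a₀ v₀‖ = ‖T a (v - v₀) + (T a v₀ - T a₀ v₀)‖ := by
        rw [map_sub]; abel_nf
    _ ≤ ‖T a‖ * ‖v - v₀‖ + ‖T a v₀ - T a₀ v₀‖ :=
        (norm_add_le _ _).trans (by gcongr; exact (T a).le_opNorm _)
    _ ≤ M * ‖v - v₀‖ + ‖T a v₀ - T a₀ v₀‖ := by gcongr; exact hM a

end

section

variable {E F : Type*} [NormedAddCommGroup E] [NormedSpace ℝ E]
  [NormedAddCommGroup F] [NormedSpace ℝ F] {S : ℝ → E →L[ℝ] F} {f : ℝ → E} {T M : ℝ}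

theorem exists_continuous_eqOn_apply_sub (hT : 0 ≤ T)
    (hS : ∀ v, ContinuousOn (fun t => S t v) (Icc 0 T)) (hM : ∀ t ∈ Icc 0 T, ‖S t‖ ≤ M)
    (hf : ContinuousOn f (Icc 0 T)) :
    ∃ G : ℝ × ℝ → F, Continuous G ∧
      ∀ t s, 0 ≤ s → s ≤ t → t ≤ T → G (t, s) = S (t - s) (f s) := by
  set π : ℝ → ℝ := fun t => projIcc 0 T hT t
  have hπ : Continuous π := continuous_subtype_val.comp continuous_projIcc
  have hπT (t : ℝ) : π t ∈ Icc 0 T := (projIcc 0 T hT t).2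
  have hjoint : Continuous fun p : ℝ × E => S (π p.1) p.2 :=
    continuous_uncurry_clm_of_norm_le (fun v => (hS v).comp_continuous hπ hπT)
      (fun t => hM _ (hπT t))
  refine ⟨fun p => S (π (p.1 - p.2)) (f (π p.2)),
    hjoint.comp ((continuous_fst.sub continuous_snd).prodMk
      ((hf.comp_continuous hπ hπT).comp continuous_snd)),
    fun t s hs hst htT => ?_⟩
  simp only [π, projIcc_of_mem hT ⟨sub_nonneg.2 hst, by linarith⟩,
    projIcc_of_mem hT ⟨hs, hst.trans htT⟩]

theorem intervalIntegrable_apply_sub (hT : 0 ≤ T)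
    (hS : ∀ v, ContinuousOn (fun t => S t v) (Icc 0 T)) (hM : ∀ t ∈ Icc 0 T, ‖S t‖ ≤ M)
    (hf : ContinuousOn f (Icc 0 T)) {t : ℝ} (ht : t ∈ Icc 0 T) :
    IntervalIntegrable (fun s => S (t - s) (f s)) volume 0 t := by
  obtain ⟨G, hG, hGS⟩ := exists_continuous_eqOn_apply_sub hT hS hM hf
  refine ContinuousOn.intervalIntegrable ?_
  rw [uIcc_of_le ht.1]
  exact (hG.comp (Continuous.prodMk_right t)).continuousOn.congr
    fun s hs => (hGS t s hs.1 hs.2 ht.2).symm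

theorem continuousOn_intervalIntegral_apply_sub (hT : 0 ≤ T)
    (hS : ∀ v, ContinuousOn (fun t => S t v) (Icc 0 T)) (hM : ∀ t ∈ Icc 0 T, ‖S t‖ ≤ M)
    (hf : ContinuousOn f (Icc 0 T)) :
    ContinuousOn (fun t => ∫ s in (0:ℝ)..t, S (t - s) (f s)) (Icc 0 T) := by
  obtain ⟨G, hG, hGS⟩ := exists_continuous_eqOn_apply_sub hT hS hM hf
  refine (intervalIntegral.continuous_parametric_intervalIntegral_of_continuous
    (μ := volume) (a₀ := 0) (f := fun t s => G (t, s)) hG continuous_id).continuousOn.congr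
    fun t ht => ?_
  refine intervalIntegral.integral_congr fun s hs => ?_
  rw [uIcc_of_le ht.1] at hs
  exact (hGS t s hs.1 hs.2 ht.2).symm

end

section

variable {α 𝕜 E : Type*} [RCLike 𝕜] [NormedAddCommGroup E] [InnerProductSpace 𝕜 E]
  [CompleteSpace E]

theorem aestronglyMeasurable_of_forall_inner [MeasurableSpace α] {μ : Measure α} {f : α → E}
    {s : Set E} (hs : IsSeparable s) (hfs : ∀ᵐ a ∂μ, f a ∈ s)
    (hf : ∀ w, AEStronglyMeasurable (fun a => inner 𝕜 w (f a)) μ) :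
    AEStronglyMeasurable f μ := by
  obtain ⟨c, hc, hsc⟩ := hs
  obtain ⟨d, hd⟩ := (hc.insert 0).exists_eq_range (insert_nonempty _ _)
  set U : ℕ → Submodule 𝕜 E := fun n => Submodule.span 𝕜 (d '' Iic n)
  have hU : Monotone U := fun m n hmn =>
    Submodule.span_mono (image_mono (Iic_subset_Iic.2 hmn))
  have (n : ℕ) : FiniteDimensional 𝕜 (U n) :=
    FiniteDimensional.span_of_finite 𝕜 ((finite_Iic n).image d)
  have hproj : ∀ n, AEStronglyMeasurable (fun a => (U n).starProjection (f a)) μ := by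
    intro n
    let b := stdOrthonormalBasis 𝕜 (U n)
    simp only [Submodule.starProjection_apply, b.orthogonalProjectionOnto_apply_eq_sum,
      Submodule.coe_sum, Submodule.coe_smul]
    exact Finset.aestronglyMeasurable_fun_sum _ fun i _ => (hf (b i)).smul_const _
  refine aestronglyMeasurable_of_tendsto_ae atTop hproj ?_
  filter_upwards [hfs] with a ha
  convert Submodule.starProjection_tendsto_closure_iSup U hU (f a)
  refine (Submodule.starProjection_eq_self_iff.2 ?_).symm
  have hsup : ⨆ n, U n = Submodule.span 𝕜 (range d) := by
    rw [← Submodule.span_iUnion, ← image_iUnion, iUnion_Iic, image_univ]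
  rw [hsup, ← SetLike.mem_coe, Submodule.topologicalClosure_coe]
  refine closure_mono (Submodule.subset_span) (closure_mono ?_ (hsc ha))
  rw [← hd]
  exact subset_insert _ _

theorem TopologicalSpace.IsSeparable.image_of_continuousOn_inner [TopologicalSpace α]
    [PseudoMetrizableSpace α] {s : Set α} (hs : IsSeparable s) {f : α → E}
    (hf : ∀ w, ContinuousOn (fun a => inner 𝕜 w (f a)) s) : IsSeparable (f '' s) := by
  obtain ⟨D, hDs, hD, hsD⟩ := hs.exists_countable_dense_subset
  set V := Submodule.span 𝕜 (f '' D)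
  refine ((hD.image f).isSeparable.span (R := 𝕜)).closure.mono ?_
  rintro _ ⟨a, ha, rfl⟩
  rw [← Submodule.topologicalClosure_coe, ← Submodule.orthogonal_orthogonal_eq_closure,
    SetLike.mem_coe, Submodule.mem_orthogonal]
  intro w hw
  have hzero : EqOn (fun a => inner 𝕜 w (f a)) 0 D := fun b hb =>
    (Submodule.mem_orthogonal' V w).1 hw _ (Submodule.subset_span (mem_image_of_mem f hb))
  exact hzero.of_subset_closure (hf w) continuousOn_const hDs hsD ha

theorem aestronglyMeasurable_restrict_of_continuousOn_inner [TopologicalSpace α]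
    [PseudoMetrizableSpace α] [SeparableSpace α] [MeasurableSpace α] [OpensMeasurableSpace α]
    {μ : Measure α} {s : Set α} (hs : MeasurableSet s) {f : α → E}
    (hf : ∀ w, ContinuousOn (fun a => inner 𝕜 w (f a)) s) :
    AEStronglyMeasurable f (μ.restrict s) :=
  aestronglyMeasurable_of_forall_inner
    ((IsSeparable.of_separableSpace s).image_of_continuousOn_inner hf)
    (ae_restrict_of_forall_mem hs fun _ => mem_image_of_mem f) fun w =>
    (hf w).aestronglyMeasurable hs

end

section

variable {α : Type*} [MeasurableSpace α] {μ : Measure α}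

theorem MeasureTheory.AEStronglyMeasurable.clm_apply_of_forall {𝕜 E F : Type*}
    [NontriviallyNormedField 𝕜] [NormedAddCommGroup E] [NormedSpace 𝕜 E] [NormedAddCommGroup F] [NormedSpace 𝕜 F]
    {T : α → E →L[𝕜] F} {u : α → E}
    (hu : AEStronglyMeasurable u μ) (hT : ∀ v, AEStronglyMeasurable (fun a => T a v) μ) :
    AEStronglyMeasurable (fun a => T a (u a)) μ := by
  have hsimple (σ : SimpleFunc α E) : AEStronglyMeasurable (fun a => T a (σ a)) μ := by
    induction σ using SimpleFunc.induction with
    | @const c s hs =>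
      convert (hT c).indicator hs using 1
      ext a
      by_cases ha : a ∈ s <;> simp [ha]
    | add _ hσ hτ =>
      simp only [SimpleFunc.coe_add, Pi.add_apply, map_add]
      exact hσ.add hτ
  have hmk := hu.stronglyMeasurable_mk
  refine (aestronglyMeasurable_of_tendsto_ae atTop (fun n => hsimple (hmk.approx n))
    (ae_of_all _ fun a => ((T a).continuous.tendsto _).comp (hmk.tendsto_approx a))).congr ?_
  filter_upwards [hu.ae_eq_mk] with a ha
  rw [ha]

theorem integral_norm_le_sqrt_measureReal_mul_sqrt_integral_norm_sq {Y : Type*}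
    [NormedAddCommGroup Y] [IsFiniteMeasure μ]
    {u : α → Y} (hu : MemLp u 2 μ) :
    ∫ a, ‖u a‖ ∂μ ≤ √(μ.real univ) * √(∫ a, ‖u a‖ ^ 2 ∂μ) := by
  have hholder := integral_mul_le_Lp_mul_Lq_of_nonneg (μ := μ) Real.HolderConjugate.two_two
    (ae_of_all _ fun a => norm_nonneg (u a)) (ae_of_all _ fun _ => zero_le_one)
    (by simpa using hu.norm) (by simpa using memLp_const (μ := μ) (p := 2) (1 : ℝ))
  simp only [mul_one, integral_const, smul_eq_mul, Real.rpow_two] at hholder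
  rw [mul_comm, Real.sqrt_eq_rpow, Real.sqrt_eq_rpow]
  simpa [one_div] using hholder

section

variable {X Y : Type*} [NormedAddCommGroup X] [InnerProductSpace ℝ X]
  [NormedAddCommGroup Y] [InnerProductSpace ℝ Y]

theorem abs_integral_inner_le_of_norm_le [IsFiniteMeasure μ] {u e : α → Y} {δ : ℝ}
    (hu : MemLp u 2 μ) (hδ : 0 ≤ δ)
    (hbound : ∀ᵐ a ∂μ, ‖e a‖ ≤ δ) :
    |∫ a, ⟪u a, e a⟫ ∂μ| ≤ δ * √(μ.real univ) * √(∫ a, ‖u a‖ ^ 2 ∂μ) := by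
  have hpt : ∀ᵐ a ∂μ, ‖⟪u a, e a⟫‖ ≤ ‖u a‖ * δ := by
    filter_upwards [hbound] with a ha
    exact (norm_inner_le_norm _ _).trans (by gcongr)
  have hint : Integrable (fun a => ‖u a‖ * δ) μ := (hu.integrable one_le_two).norm.mul_const δ
  calc |∫ a, ⟪u a, e a⟫ ∂μ| ≤ ∫ a, ‖u a‖ * δ ∂μ := by
        rw [← Real.norm_eq_abs]; exact norm_integral_le_of_norm_le hint hpt
    _ = δ * ∫ a, ‖u a‖ ∂μ := by rw [integral_mul_const, mul_comm]
    _ ≤ δ * (√(μ.real univ) * √(∫ a, ‖u a‖ ^ 2 ∂μ)) := by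
        gcongr; exact integral_norm_le_sqrt_measureReal_mul_sqrt_integral_norm_sq hu
    _ = _ := by ring

variable [CompleteSpace X] [CompleteSpace Y]

theorem integral_inner_apply_eq_inner_integral_adjoint {T : α → X →L[ℝ] Y} {u : α → Y}
    (hTu : Integrable (fun a => (T a).adjoint (u a)) μ) (x : X) :
    ∫ a, ⟪u a, T a x⟫ ∂μ = ⟪x, ∫ a, (T a).adjoint (u a) ∂μ⟫ := by
  rw [← integral_inner hTu x]
  simp only [ContinuousLinearMap.adjoint_inner_right, real_inner_comm]

theorem abs_inner_sub_integral_inner_le [IsFiniteMeasure μ] {T : α → X →L[ℝ] Y} {u z e : α → Y}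
    {x₀ φ : X} {ε δ : ℝ} (hu : MemLp u 2 μ) (hTu : Integrable (fun a => (T a).adjoint (u a)) μ)
    (hL : ‖∫ a, (T a).adjoint (u a) ∂μ - φ‖ ≤ ε) (hze : ∀ᵐ a ∂μ, z a = T a x₀ + e a)
    (he : AEStronglyMeasurable e μ) (hδ : 0 ≤ δ) (hbound : ∀ᵐ a ∂μ, ‖e a‖ ≤ δ) :
    |⟪x₀, φ⟫ - ∫ a, ⟪u a, z a⟫ ∂μ| ≤
      ε * ‖x₀‖ + δ * √(μ.real univ) * √(∫ a, ‖u a‖ ^ 2 ∂μ) := by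
  have hmodel : Integrable (fun a => ⟪u a, T a x₀⟫) μ := by
    simpa only [ContinuousLinearMap.adjoint_inner_left] using hTu.inner_const (𝕜 := ℝ) x₀
  have hnoise : Integrable (fun a => ⟪u a, e a⟫) μ := by
    refine Integrable.mono' ((hu.integrable one_le_two).norm.mul_const δ)
      (hu.aestronglyMeasurable.inner he) ?_
    filter_upwards [hbound] with a ha
    exact (norm_inner_le_norm _ _).trans (by gcongr)
  have hsplit : ∫ a, ⟪u a, z a⟫ ∂μ = ⟪x₀, ∫ a, (T a).adjoint (u a) ∂μ⟫ + ∫ a, ⟪u a, e a⟫ ∂μ := by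
    rw [← integral_inner_apply_eq_inner_integral_adjoint hTu, ← integral_add hmodel hnoise]
    refine integral_congr_ae ?_
    filter_upwards [hze] with a ha
    rw [ha, inner_add_right]
  have hcoef : |⟪x₀, φ⟫ - ⟪x₀, ∫ a, (T a).adjoint (u a) ∂μ⟫| ≤ ε * ‖x₀‖ := by
    rw [← inner_sub_right, mul_comm]
    refine (abs_real_inner_le_norm _ _).trans ?_
    rw [norm_sub_rev]
    gcongr
  rw [hsplit, ← sub_sub]
  exact (abs_sub _ _).trans (add_le_add hcoef (abs_integral_inner_le_of_norm_le hu hδ hbound))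

end

end

section

variable {α X Y : Type*} [NormedAddCommGroup X] [InnerProductSpace ℝ X] [CompleteSpace X]
  [NormedAddCommGroup Y] [InnerProductSpace ℝ Y] [CompleteSpace Y]

theorem integrable_adjoint_apply_of_continuousOn [TopologicalSpace α] [PseudoMetrizableSpace α]
    [SeparableSpace α] [MeasurableSpace α] [OpensMeasurableSpace α] {μ : Measure α} {s : Set α}
    (hs : MeasurableSet s) {T : α → X →L[ℝ] Y} {M : ℝ} (hT : ∀ v, ContinuousOn (fun a => T a v) s)
    (hM : ∀ a ∈ s, ‖T a‖ ≤ M) {u : α → Y} (hu : Integrable u (μ.restrict s)) :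
    Integrable (fun a => (T a).adjoint (u a)) (μ.restrict s) := by
  have hweak (v : Y) : AEStronglyMeasurable (fun a => (T a).adjoint v) (μ.restrict s) :=
    aestronglyMeasurable_restrict_of_continuousOn_inner (𝕜 := ℝ) hs fun w => by
      simpa only [ContinuousLinearMap.adjoint_inner_right] using (hT w).inner continuousOn_const
  refine (hu.norm.const_mul M).mono' (hu.aestronglyMeasurable.clm_apply_of_forall hweak) ?_
  filter_upwards [ae_restrict_mem hs] with a ha
  calc ‖(T a).adjoint (u a)‖ ≤ ‖(T a).adjoint‖ * ‖u a‖ := ContinuousLinearMap.le_opNorm _ _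
    _ ≤ M * ‖u a‖ := by rw [LinearIsometryEquiv.norm_map]; gcongr; exact hM a ha

end

theorem norm_sub_sum_smul_le {ι 𝕜 E : Type*} [NormedField 𝕜] [SeminormedAddCommGroup E]
    [NormedSpace 𝕜 E] (s : Finset ι) (x : E) (a b : ι → 𝕜) (φ : ι → E) :
    ‖x - ∑ i ∈ s, a i • φ i‖ ≤ ‖x - ∑ i ∈ s, b i • φ i‖ + ∑ i ∈ s, ‖b i - a i‖ * ‖φ i‖ := by
  have hsplit : x - ∑ i ∈ s, a i • φ i = (x - ∑ i ∈ s, b i • φ i) + ∑ i ∈ s, (b i - a i) • φ i := by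
    simp only [sub_smul, Finset.sum_sub_distrib]
    abel
  rw [hsplit]
  refine (norm_add_le _ _).trans ?_
  gcongr
  exact (norm_sum_le _ _).trans_eq (by simp only [norm_smul])

theorem dual_control_error_estimate_general
    {X Y : Type*} [NormedAddCommGroup X] [InnerProductSpace ℝ X] [CompleteSpace X]
    [NormedAddCommGroup Y] [InnerProductSpace ℝ Y] [CompleteSpace Y]
    (t_f : ℝ) (ht_f : 0 < t_f)
    (S : ℝ → X →L[ℝ] X) (M : ℝ)
    (hScont : ∀ x : X, ContinuousOn (fun t => S t x) (Set.Icc 0 t_f))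
    (hSbound : ∀ t ∈ Set.Icc 0 t_f, ‖S t‖ ≤ M)
    (C : X →L[ℝ] Y)
    (f : ℝ → X) (hf : ContinuousOn f (Set.Icc 0 t_f))
    (x₀ : X)
    (x : ℝ → X) (hx : ∀ t, x t = S t x₀ + ∫ s in (0:ℝ)..t, S (t - s) (f s))
    (y : ℝ → Y) (hy : ∀ t, y t = C (x t))
    (ξ : ℝ → Y) (hξ : ∀ t, ξ t = ∫ s in (0:ℝ)..t, C (S (t - s) (f s)))
    (m : ℕ) (φ : Fin (m + 1) → X) (hφ : Orthonormal ℝ φ)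
    (u : Fin (m + 1) → ℝ → Y)
    (hu : ∀ k, MemLp (u k) 2 (volume.restrict (Set.Ioc (0:ℝ) t_f)))
    (ε : Fin (m + 1) → ℝ)
    (hctrl : ∀ k, ‖(∫ s in Set.Ioc (0:ℝ) t_f,
        (ContinuousLinearMap.adjoint (S s)) ((ContinuousLinearMap.adjoint C) (u k s))) -
        φ k‖ ≤ ε k)
    (δ : ℝ) (hδ : 0 ≤ δ)
    (yδ : ℝ → Y) (hyδmem : MemLp yδ 2 (volume.restrict (Set.Ioc (0:ℝ) t_f)))
    (hnoise : ∀ᵐ t ∂(volume.restrict (Set.Ioc (0:ℝ) t_f)), ‖yδ t - y t‖ ≤ δ) :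
    ‖x₀ - ∑ k : Fin (m + 1),
        (∫ t in Set.Ioc (0:ℝ) t_f, ⟪u k t, yδ t - ξ t⟫) • φ k‖ ≤
      ‖x₀ - ∑ k : Fin (m + 1), ⟪x₀, φ k⟫ • φ k‖ +
        ∑ k : Fin (m + 1),
          (ε k * ‖x₀‖ +
            δ * Real.sqrt t_f * Real.sqrt (∫ t in Set.Ioc (0:ℝ) t_f, ‖u k t‖ ^ 2)) := by
  set μ := volume.restrict (Set.Ioc (0:ℝ) t_f)
  have hIoc : Ioc (0:ℝ) t_f ⊆ Icc 0 t_f := Ioc_subset_Icc_self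
  have hy_sub_ξ : ∀ t ∈ Icc 0 t_f, y t - ξ t = C (S t x₀) := fun t ht => by
    rw [hy, hx, hξ, map_add, ← C.intervalIntegral_comp_comm
      (intervalIntegrable_apply_sub ht_f.le hScont hSbound hf ht)]
    abel
  have hy_cont : ContinuousOn y (Icc 0 t_f) := by
    have hx_cont : ContinuousOn x (Icc 0 t_f) :=
      ((hScont x₀).add (continuousOn_intervalIntegral_apply_sub ht_f.le hScont hSbound hf)).congr
        fun t _ => hx t
    exact (C.continuous.comp_continuousOn hx_cont).congr fun t _ => hy t
  have hTu (k : Fin (m + 1)) : Integrable (fun t => (C.comp (S t)).adjoint (u k t)) μ :=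
    integrable_adjoint_apply_of_continuousOn measurableSet_Ioc (M := ‖C‖ * M)
      (fun v => (C.continuous.comp_continuousOn (hScont v)).mono hIoc)
      (fun t ht => (C.opNorm_comp_le _).trans (by gcongr; exact hSbound t (hIoc ht)))
      ((hu k).integrable one_le_two)
  have hze : ∀ᵐ t ∂μ, yδ t - ξ t = C.comp (S t) x₀ + (yδ t - y t) := by
    filter_upwards [ae_restrict_mem measurableSet_Ioc] with t ht
    rw [ContinuousLinearMap.comp_apply, ← hy_sub_ξ t (hIoc ht)]
    abel
  have hvol : μ.real univ = t_f := by
    rw [measureReal_restrict_apply_univ, Real.volume_real_Ioc_of_le ht_f.le, sub_zero]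
  have hcoef (k : Fin (m + 1)) := abs_inner_sub_integral_inner_le (hu k) (hTu k)
    (by simpa only [ContinuousLinearMap.adjoint_comp, ContinuousLinearMap.comp_apply]
      using hctrl k) hze (hyδmem.aestronglyMeasurable.sub ((hy_cont.mono hIoc).aestronglyMeasurable measurableSet_Ioc))
    hδ hnoise
  refine (norm_sub_sum_smul_le _ _ _ (fun k => ⟪x₀, φ k⟫) _).trans ?_
  gcongr with k
  rw [hφ.1 k, mul_one, Real.norm_eq_abs, ← hvol]
  exact hcoef k

/-- Error estimate for the dual control reconstruction (Theorem 2.1): if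
`{φ_k}_{k=0}^m` is orthonormal, `‖𝓛u_k - φ_k‖ ≤ ε_k`, and the noisy data satisfies
`‖y^δ(t) - y(t)‖ ≤ δ` a.e., then with `x^m = Σ ⟨x₀, φ_k⟩ φ_k` and
`x_δ^m = Σ α_k^δ φ_k`, `α_k^δ = ∫₀^{t_f} ⟨u_k(t), y^δ(t) - ξ(t)⟩ dt`, one has
`‖x₀ - x_δ^m‖ ≤ ‖x₀ - x^m‖ + Σ_k (ε_k ‖x₀‖ + δ √t_f ‖u_k‖_{L²})`. -/
theorem dual_control_error_estimate
    {X Y : Type*} [NormedAddCommGroup X] [InnerProductSpace ℝ X] [CompleteSpace X]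
    [NormedAddCommGroup Y] [InnerProductSpace ℝ Y] [CompleteSpace Y]
    (t_f : ℝ) (ht_f : 0 < t_f)
    (S : ℝ → X →L[ℝ] X) (M : ℝ)
    (hS0 : S 0 = ContinuousLinearMap.id ℝ X)
    (hSadd : ∀ s t : ℝ, s ∈ Set.Icc 0 t_f → t ∈ Set.Icc 0 t_f → s + t ∈ Set.Icc 0 t_f →
      S (s + t) = (S s).comp (S t))
    (hScont : ∀ x : X, ContinuousOn (fun t => S t x) (Set.Icc 0 t_f))
    (hSbound : ∀ t ∈ Set.Icc 0 t_f, ‖S t‖ ≤ M)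
    (C : X →L[ℝ] Y)
    (f : ℝ → X) (hf : ContinuousOn f (Set.Icc 0 t_f))
    (x₀ : X)
    (x : ℝ → X) (hx : ∀ t, x t = S t x₀ + ∫ s in (0:ℝ)..t, S (t - s) (f s))
    (y : ℝ → Y) (hy : ∀ t, y t = C (x t))
    (ξ : ℝ → Y) (hξ : ∀ t, ξ t = ∫ s in (0:ℝ)..t, C (S (t - s) (f s)))
    (m : ℕ) (φ : Fin (m + 1) → X) (hφ : Orthonormal ℝ φ)
    (u : Fin (m + 1) → ℝ → Y)
    (hu : ∀ k, MemLp (u k) 2 (volume.restrict (Set.Ioc (0:ℝ) t_f)))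
    (ε : Fin (m + 1) → ℝ)
    (hctrl : ∀ k, ‖(∫ s in Set.Ioc (0:ℝ) t_f,
        (ContinuousLinearMap.adjoint (S s)) ((ContinuousLinearMap.adjoint C) (u k s))) -
        φ k‖ ≤ ε k)
    (δ : ℝ) (hδ : 0 ≤ δ)
    (yδ : ℝ → Y) (hyδmem : MemLp yδ 2 (volume.restrict (Set.Ioc (0:ℝ) t_f)))
    (hnoise : ∀ᵐ t ∂(volume.restrict (Set.Ioc (0:ℝ) t_f)), ‖yδ t - y t‖ ≤ δ) :
    ‖x₀ - ∑ k : Fin (m + 1),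
        (∫ t in Set.Ioc (0:ℝ) t_f, ⟪u k t, yδ t - ξ t⟫) • φ k‖ ≤
      ‖x₀ - ∑ k : Fin (m + 1), ⟪x₀, φ k⟫ • φ k‖ +
        ∑ k : Fin (m + 1),
          (ε k * ‖x₀‖ +
            δ * Real.sqrt t_f * Real.sqrt (∫ t in Set.Ioc (0:ℝ) t_f, ‖u k t‖ ^ 2)) :=
  dual_control_error_estimate_general t_f ht_f S M hScont hSbound C f hf x₀ x hx y hy ξ hξ m φ hφ u
    hu ε hctrl δ hδ yδ hyδmem hnoise
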